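/- Let (X,T) be a topological dynamical system. Suppose F = {f₁,…,f_p} ⊆ C(X) is a finite set such that the closed linear span of {f_i ∘ Tⁿ : 1 ≤ i ≤ p, n ∈ ℤ} ∪ B_T(X) equals C(X), and G = {g₁,…,g_q} is a finite subset of the closure of B_T(X) such that the closed linear span of {g_j ∘ Tⁿ : 1 ≤ j ≤ q, n ∈ ℤ} equals the closure of B_T(X). Then there exists a set H ⊆ C(X) with at most p + q − 1 elements such that the linear span of {h ∘ Tⁿ : h ∈ H, n ∈ ℤ} is dense in C(X). Consequently Mult(T) ≤ p + q − 1. -/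

import Mathlib

/-- Iterates of a homeomorphism, indexed by natural numbers. -/
def hiterN {X : Type*} [TopologicalSpace X] (T : X ≃ₜ X) : ℕ → (X ≃ₜ X)
  | 0 => Homeomorph.refl X
  | n + 1 => (hiterN T n).trans T

/-- Iterates of a homeomorphism, indexed by integers. -/
def hiter {X : Type*} [TopologicalSpace X] (T : X ≃ₜ X) : ℤ → (X ≃ₜ X)
  | Int.ofNat n => hiterN T n
  | Int.negSucc n => (hiterN T (n + 1)).symm

/-- The set of all iterates `f ∘ Tⁿ` for `f ∈ F` and `n ∈ ℤ`. -/
def iterSet {X : Type*} [TopologicalSpace X] (T : X ≃ₜ X) (F : Set C(X, ℝ)) :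
    Set C(X, ℝ) :=
  {h | ∃ f ∈ F, ∃ n : ℤ, h = f.comp (hiter T n : C(X, X))}

/-- The set `B_T(X) = {φ ∘ T - φ : φ ∈ C(X)}` of continuous `T`-coboundaries. -/
def cobSet {X : Type*} [TopologicalSpace X] (T : X ≃ₜ X) : Set C(X, ℝ) :=
  {g | ∃ φ : C(X, ℝ), g = φ.comp (T : C(X, X)) - φ}

/-!
Write `B` for the closure of the coboundaries. A coboundary `φ ∘ T - φ` is `≤ 0` at a maximum
point of `φ`, so `1 ∉ B`; on the other hand `1 ∈ span F + B`, this subspace being closed as the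
sum of a closed and a finite-dimensional one. Hence some `f₀ ∈ F` lies in
`span ({1} ∪ F \ {f₀}) + B`. Take `H = {1 + g₁} ∪ (F \ {f₀}) ∪ (G \ {g₁})` and let `M` be the
closed span of the iterates of `H`. The Birkhoff averages of `g₁ ∈ B` tend to `0`, so those of
`1 + g₁` tend to `1`, and `1 ∈ M`. Then every `g₁ ∘ Tⁿ` lies in `M`, so `B ⊆ M`, so `f₀ ∈ M`;
as `f ∘ Tⁿ - f ∈ B`, the closed subspace `M` contains all iterates of `F` together with `B`,
hence `M = C(X)`.
-/

open Filter Topology Function Submodule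

section BirkhoffAverage

variable {𝕜 E : Type*} [RCLike 𝕜] [NormedAddCommGroup E] [NormedSpace 𝕜 E]

theorem LinearMap.tendsto_birkhoffAverage_of_mem_closure_range_sub_one {f : E →ₗ[𝕜] E}
    (hf : LipschitzWith 1 f) {y : E} (hy : y ∈ closure (LinearMap.range (f - 1) : Set E)) :
    Tendsto (birkhoffAverage 𝕜 f _root_.id · y) atTop (𝓝 0) := by
  have hclosed : IsClosed {x | Tendsto (birkhoffAverage 𝕜 f _root_.id · x) atTop (𝓝 0)} :=
    isClosed_setOfPred_tendsto_birkhoffAverage 𝕜 hf uniformContinuous_id continuous_const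
  refine closure_minimal (Set.forall_mem_range.2 fun x ↦ ?_) hclosed hy
  -- The average of `f x - x` telescopes to `(f^[n] x - x) / n`, and the orbit of `x` is bounded.
  have hbdd : Bornology.IsBounded (Set.range (_root_.id <| f^[·] x)) :=
    isBounded_iff_forall_norm_le.2 ⟨‖x‖, Set.forall_mem_range.2 fun n ↦ by
      simpa [iterate_map_zero] using (hf.iterate n).dist_le_mul x 0⟩
  simpa [birkhoffAverage, birkhoffSum, Finset.sum_sub_distrib, smul_sub, iterate_map_sub]
    using tendsto_birkhoffAverage_apply_sub_birkhoffAverage 𝕜 hbdd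

theorem LinearMap.birkhoffAverage_mem {f : E →ₗ[𝕜] E} {M : Submodule 𝕜 E} {x : E}
    (hx : ∀ n, f^[n] x ∈ M) (N : ℕ) : birkhoffAverage 𝕜 f _root_.id N x ∈ M :=
  M.smul_mem _ (M.sum_mem fun n _ ↦ hx n)

theorem LinearMap.birkhoffAverage_add (f : E →ₗ[𝕜] E) (N : ℕ) (x y : E) :
    birkhoffAverage 𝕜 f _root_.id N (x + y) =
      birkhoffAverage 𝕜 f _root_.id N x + birkhoffAverage 𝕜 f _root_.id N y := by
  simp [birkhoffAverage, birkhoffSum, iterate_map_add, Finset.sum_add_distrib, smul_add]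

/-- Averaging along the orbit kills the part of `z + y` lying in the closure of `range (f - 1)`. -/
theorem LinearMap.mem_of_forall_iterate_add_mem {f : E →ₗ[𝕜] E} (hf : LipschitzWith 1 f)
    {M : Submodule 𝕜 E} (hM : IsClosed (M : Set E)) {z y : E} (hz : IsFixedPt f z)
    (hy : y ∈ closure (LinearMap.range (f - 1) : Set E)) (h : ∀ n, f^[n] (z + y) ∈ M) :
    z ∈ M := by
  have hlim : Tendsto (fun N ↦ z + birkhoffAverage 𝕜 f _root_.id N y) atTop (𝓝 (z + 0)) :=
    tendsto_const_nhds.add (f.tendsto_birkhoffAverage_of_mem_closure_range_sub_one hf hy)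
  refine (add_zero z ▸ hM.mem_of_tendsto hlim) ?_
  filter_upwards [eventually_ne_atTop 0] with N hN
  have hmem := LinearMap.birkhoffAverage_mem h N
  rwa [f.birkhoffAverage_add, hz.birkhoffAverage_eq 𝕜 _root_.id (Nat.cast_ne_zero.2 hN)] at hmem

end BirkhoffAverage

theorem Submodule.exists_mem_span_insert_erase_sup {K E : Type*} [Field K] [AddCommGroup E]
    [Module K E] [DecidableEq E] {s : Finset E} {W : Submodule K E} {v : E}
    (hv : v ∈ span K (s : Set E) ⊔ W) (hvW : v ∉ W) :
    ∃ a ∈ s, a ∈ span K (insert v (s.erase a : Set E)) ⊔ W := by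
  obtain ⟨w, hw, k, hk, rfl⟩ := mem_sup.mp hv
  obtain ⟨c, -, rfl⟩ := mem_span_finset.mp hw
  obtain ⟨a, ha, hca⟩ : ∃ a ∈ s, c a ≠ 0 := by
    by_contra! hc
    have hzero : ∑ a ∈ s, c a • a = 0 := Finset.sum_eq_zero fun a ha ↦ by rw [hc a ha, zero_smul]
    exact hvW (by rwa [hzero, zero_add])
  refine ⟨a, ha, ?_⟩
  have hca_a : c a • a = (∑ b ∈ s, c b • b + k) - ∑ b ∈ s.erase a, c b • b - k := by
    rw [← Finset.add_sum_erase s _ ha]; abel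
  set v := ∑ b ∈ s, c b • b + k
  set S := span K (insert v (s.erase a : Set E)) ⊔ W
  have hvS : v ∈ S := mem_sup_left (subset_span (Set.mem_insert _ _))
  have hrest : ∑ b ∈ s.erase a, c b • b ∈ S :=
    mem_sup_left (sum_mem fun b hb ↦ smul_mem _ _ (subset_span (Set.mem_insert_of_mem _ hb)))
  have hmem : (c a)⁻¹ • (c a • a) ∈ S :=
    smul_mem _ _ (hca_a ▸ sub_mem (sub_mem hvS hrest) (mem_sup_right hk))
  rwa [inv_smul_smul₀ hca] at hmem

section Iterates

variable {X : Type*} [TopologicalSpace X] (T : X ≃ₜ X)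

theorem hiterN_eq_pow (n : ℕ) : hiterN T n = T ^ n := by
  induction n with
  | zero => rfl
  | succ n ih => rw [pow_succ', ← ih]; rfl

theorem hiter_eq_zpow (n : ℤ) : hiter T n = T ^ n := by
  cases n with
  | ofNat n => exact hiterN_eq_pow T n
  | negSucc n => rw [zpow_negSucc, ← hiterN_eq_pow]; rfl

theorem comp_hiter_add_one (f : C(X, ℝ)) (n : ℤ) :
    f.comp (hiter T (n + 1) : C(X, X)) = (f.comp (hiter T n : C(X, X))).comp (T : C(X, X)) := by
  ext x
  simp [hiter_eq_zpow, zpow_add_one]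

theorem comp_hiter_mem_iterSet {A : Set C(X, ℝ)} {f : C(X, ℝ)} (hf : f ∈ A) (n : ℤ) :
    f.comp (hiter T n : C(X, X)) ∈ iterSet T A :=
  ⟨f, hf, n, rfl⟩

theorem subset_iterSet (A : Set C(X, ℝ)) : A ⊆ iterSet T A :=
  fun _ hf ↦ comp_hiter_mem_iterSet T hf 0

theorem iterSet_mono {A B : Set C(X, ℝ)} (h : A ⊆ B) : iterSet T A ⊆ iterSet T B := by
  rintro _ ⟨f, hf, n, rfl⟩
  exact comp_hiter_mem_iterSet T (h hf) n

def koopman : C(X, ℝ) →ₗ[ℝ] C(X, ℝ) :=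
  (ContinuousMap.compStarAlgHom' ℝ ℝ (T : C(X, X))).toLinearMap

theorem koopman_apply (φ : C(X, ℝ)) : koopman T φ = φ.comp (T : C(X, X)) := rfl

theorem coe_range_koopman_sub_one :
    (LinearMap.range (koopman T - 1) : Set C(X, ℝ)) = cobSet T := by
  ext g
  exact ⟨fun ⟨φ, hφ⟩ ↦ ⟨φ, hφ.symm⟩, fun ⟨φ, hφ⟩ ↦ ⟨φ, hφ.symm⟩⟩

theorem iterate_koopman (n : ℕ) (φ : C(X, ℝ)) :
    (koopman T)^[n] φ = φ.comp (hiter T n : C(X, X)) := by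
  induction n with
  | zero => rfl
  | succ n ih =>
    rw [iterate_succ_apply', ih, koopman_apply, Nat.cast_succ, comp_hiter_add_one]

theorem comp_hiter_sub_self_mem_range (f : C(X, ℝ)) (n : ℤ) :
    f.comp (hiter T n : C(X, X)) - f ∈ LinearMap.range (koopman T - 1) := by
  induction n using Int.induction_on with
  | zero => exact (sub_self f).symm ▸ zero_mem _
  | succ n ih =>
    have hstep := LinearMap.mem_range_self (koopman T - 1) (f.comp (hiter T n : C(X, X)))
    rw [LinearMap.sub_apply, Module.End.one_apply, koopman_apply, ← comp_hiter_add_one] at hstep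
    simpa using add_mem hstep ih
  | pred n ih =>
    have hstep := LinearMap.mem_range_self (koopman T - 1) (f.comp (hiter T (-n - 1) : C(X, X)))
    rw [LinearMap.sub_apply, Module.End.one_apply, koopman_apply, ← comp_hiter_add_one,
      sub_add_cancel] at hstep
    simpa using sub_mem ih hstep

theorem iterSet_subset {M : Submodule ℝ C(X, ℝ)} {A : Set C(X, ℝ)} (hA : A ⊆ M)
    (hcob : cobSet T ⊆ M) : iterSet T A ⊆ M := by
  rintro _ ⟨f, hf, n, rfl⟩
  have hcob' : f.comp (hiter T n : C(X, X)) - f ∈ M :=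
    hcob (coe_range_koopman_sub_one T ▸ comp_hiter_sub_self_mem_range T f n)
  simpa using add_mem (hA hf) hcob'

theorem closure_span_iterSet_union_cobSet_subset {M : Submodule ℝ C(X, ℝ)}
    (hM : IsClosed (M : Set C(X, ℝ))) {A : Set C(X, ℝ)} (hA : A ⊆ M) (hcob : cobSet T ⊆ M) :
    closure (span ℝ (iterSet T A ∪ cobSet T) : Set C(X, ℝ)) ⊆ M :=
  closure_minimal (span_le.mpr (Set.union_subset (iterSet_subset T hA hcob) hcob)) hM

def coboundaryClosure : Submodule ℝ C(X, ℝ) :=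
  (LinearMap.range (koopman T - 1)).topologicalClosure

theorem coe_coboundaryClosure : (coboundaryClosure T : Set C(X, ℝ)) = closure (cobSet T) := by
  rw [coboundaryClosure, topologicalClosure_coe, coe_range_koopman_sub_one]

theorem span_sup_coboundaryClosure_eq_top {F : Finset C(X, ℝ)}
    (hF : closure (span ℝ (iterSet T (F : Set C(X, ℝ)) ∪ cobSet T) : Set C(X, ℝ)) = Set.univ) :
    span ℝ (F : Set C(X, ℝ)) ⊔ coboundaryClosure T = ⊤ := by
  have hclosed : IsClosed
      ((span ℝ (F : Set C(X, ℝ)) ⊔ coboundaryClosure T : Submodule ℝ C(X, ℝ)) : Set C(X, ℝ)) := by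
    rw [sup_comm]
    exact isClosed_sup_finiteDimensional _ _ (isClosed_topologicalClosure _)
  refine eq_top_iff'.mpr fun φ ↦ closure_span_iterSet_union_cobSet_subset T hclosed
    (fun f hf ↦ mem_sup_left (subset_span hf)) (fun g hg ↦ mem_sup_right ?_) (hF ▸ Set.mem_univ φ)
  exact SetLike.mem_coe.mp (coe_coboundaryClosure T ▸ subset_closure hg)

end Iterates

section Compact

variable {X : Type*} [MetricSpace X] [CompactSpace X] (T : X ≃ₜ X)

theorem lipschitzWith_one_koopman : LipschitzWith 1 (koopman T) :=
  AddMonoidHomClass.lipschitz_of_bound_nnnorm _ 1 fun φ ↦ by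
    rw [one_mul, ← NNReal.coe_le_coe, coe_nnnorm, coe_nnnorm,
      ContinuousMap.norm_le _ (norm_nonneg φ)]
    exact fun x ↦ φ.norm_coe_le_norm (T x)

/-- At a maximum point `x₀` of `φ`, the coboundary `φ ∘ T - φ` is `≤ 0`. -/
theorem one_notMem_closure_cobSet [Nonempty X] : (1 : C(X, ℝ)) ∉ closure (cobSet T) := by
  intro h
  obtain ⟨_, ⟨φ, rfl⟩, hdist⟩ := Metric.mem_closure_iff.mp h 1 one_pos
  obtain ⟨x₀, -, hx₀⟩ := isCompact_univ.exists_isMaxOn Set.univ_nonempty φ.continuous.continuousOn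
  have hle : φ (T x₀) ≤ φ x₀ := hx₀ (Set.mem_univ _)
  have hx₀dist := (ContinuousMap.dist_apply_le_dist x₀).trans_lt hdist
  simp only [Real.dist_eq, ContinuousMap.one_apply, ContinuousMap.sub_apply,
    ContinuousMap.comp_apply, ContinuousMap.coe_coe] at hx₀dist
  linarith [le_abs_self (1 - (φ (T x₀) - φ x₀))]

theorem one_mem_of_iterSet_one_add_subset {M : Submodule ℝ C(X, ℝ)}
    (hM : IsClosed (M : Set C(X, ℝ))) {g : C(X, ℝ)} (hg : g ∈ closure (cobSet T))
    (h : iterSet T {1 + g} ⊆ M) : (1 : C(X, ℝ)) ∈ M := by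
  refine (koopman T).mem_of_forall_iterate_add_mem (y := g) (lipschitzWith_one_koopman T) hM
    (ContinuousMap.one_comp _) ?_ fun n ↦ ?_
  · rwa [coe_range_koopman_sub_one]
  · rw [iterate_koopman]
    exact h (comp_hiter_mem_iterSet T (Set.mem_singleton _) n)

theorem dense_span_iterSet_insert_one_add_union_erase [DecidableEq C(X, ℝ)]
    {F G : Finset C(X, ℝ)}
    (hF : closure (span ℝ (iterSet T (F : Set C(X, ℝ)) ∪ cobSet T) : Set C(X, ℝ)) = Set.univ)
    (hG : closure (span ℝ (iterSet T (G : Set C(X, ℝ))) : Set C(X, ℝ)) = closure (cobSet T))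
    {f₀ g₁ : C(X, ℝ)}
    (hf₀ : f₀ ∈ span ℝ (insert 1 (F.erase f₀ : Set C(X, ℝ))) ⊔ coboundaryClosure T)
    (hg₁ : g₁ ∈ closure (cobSet T)) :
    Dense (span ℝ (iterSet T ((insert (1 + g₁) (F.erase f₀ ∪ G.erase g₁) : Finset C(X, ℝ)) :
      Set C(X, ℝ))) : Set C(X, ℝ)) := by
  set H := insert (1 + g₁) (F.erase f₀ ∪ G.erase g₁)
  set M := (span ℝ (iterSet T (H : Set C(X, ℝ)))).topologicalClosure
  have hM : IsClosed (M : Set C(X, ℝ)) := isClosed_topologicalClosure _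
  have hHM : iterSet T H ⊆ M := subset_span.trans (le_topologicalClosure _)
  have h1M : (1 : C(X, ℝ)) ∈ M :=
    one_mem_of_iterSet_one_add_subset T hM hg₁ ((iterSet_mono T (by simp [H])).trans hHM)
  have hGM : iterSet T G ⊆ M := by
    rintro _ ⟨g, hg, n, rfl⟩
    by_cases hgg₁ : g = g₁
    · subst hgg₁
      have := sub_mem (hHM (comp_hiter_mem_iterSet T (Finset.mem_insert_self _ _) n)) h1M
      simpa [ContinuousMap.add_comp] using this
    · exact hHM (comp_hiter_mem_iterSet T (by simp [H, hg, hgg₁]) n)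
  have hBM : closure (cobSet T) ⊆ M := hG ▸ closure_minimal (span_le.mpr hGM) hM
  have hFM : (F : Set C(X, ℝ)) ⊆ M := by
    intro f hf
    by_cases hff₀ : f = f₀
    · subst hff₀
      refine sup_le (span_le.mpr (Set.insert_subset h1M fun f' hf' ↦ ?_))
        (fun _ hx ↦ hBM (coe_coboundaryClosure T ▸ SetLike.mem_coe.mpr hx)) hf₀
      exact hHM (subset_iterSet T _ (by simp_all [H]))
    · exact hHM (subset_iterSet T _ (by simp [H, hf, hff₀]))
  rw [dense_iff_closure_eq, ← topologicalClosure_coe]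
  exact Set.eq_univ_of_univ_subset
    (hF ▸ closure_span_iterSet_union_cobSet_subset T hM hFM (subset_closure.trans hBM))

end Compact

theorem mult_le_quotient_mult_add_coboundary_mult_sub_one_general
    {X : Type*} [MetricSpace X] [CompactSpace X]
    (T : X ≃ₜ X) (p q : ℕ) (hq : 1 ≤ q)
    (F G : Finset C(X, ℝ)) (hFcard : F.card = p) (hGcard : G.card = q)
    (hF : closure (Submodule.span ℝ (iterSet T (F : Set C(X, ℝ)) ∪ cobSet T) : Set C(X, ℝ))
      = Set.univ)
    (hGsub : (G : Set C(X, ℝ)) ⊆ closure (cobSet T))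
    (hG : closure (Submodule.span ℝ (iterSet T (G : Set C(X, ℝ))) : Set C(X, ℝ))
      = closure (cobSet T)) :
    ∃ H : Finset C(X, ℝ), H.card ≤ p + q - 1 ∧
      Dense (Submodule.span ℝ (iterSet T (H : Set C(X, ℝ))) : Set C(X, ℝ)) := by
  classical
  rcases isEmpty_or_nonempty X with hX | hX
  · exact ⟨∅, Nat.zero_le _, fun φ ↦ Subsingleton.elim 0 φ ▸ subset_closure (zero_mem _)⟩
  obtain ⟨g₁, hg₁⟩ : G.Nonempty := Finset.card_pos.mp (hGcard ▸ hq)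
  obtain ⟨f₀, hf₀, hf₀B⟩ := exists_mem_span_insert_erase_sup
    (span_sup_coboundaryClosure_eq_top T hF ▸ mem_top (x := (1 : C(X, ℝ))))
    (fun h ↦ one_notMem_closure_cobSet T (coe_coboundaryClosure T ▸ SetLike.mem_coe.mpr h))
  refine ⟨insert (1 + g₁) (F.erase f₀ ∪ G.erase g₁), ?_,
    dense_span_iterSet_insert_one_add_union_erase T hF hG hf₀B (hGsub hg₁)⟩
  have := Finset.card_pos.mpr ⟨f₀, hf₀⟩
  grw [Finset.card_insert_le, Finset.card_union_le, Finset.card_erase_of_mem hf₀,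
    Finset.card_erase_of_mem hg₁]
  omega

/-- Let `(X, T)` be a topological dynamical system.  Suppose `F = {f₁, …, f_p} ⊆ C(X)` is
such that the closed linear span of `{fᵢ ∘ Tⁿ} ∪ B_T(X)` is all of `C(X)`, and
`G = {g₁, …, g_q}` is a finite subset of the closure of `B_T(X)` whose closed span of
iterates equals the closure of `B_T(X)`.  Then there is a set `H ⊆ C(X)` with at most
`p + q - 1` elements whose iterates span a dense subspace of `C(X)`; consequently
`Mult(T) ≤ p + q - 1`. -/
theorem mult_le_quotient_mult_add_coboundary_mult_sub_one
    {X : Type*} [MetricSpace X] [CompactSpace X]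
    (T : X ≃ₜ X) (p q : ℕ) (hp : 1 ≤ p) (hq : 1 ≤ q)
    (F G : Finset C(X, ℝ)) (hFcard : F.card = p) (hGcard : G.card = q)
    (hF : closure (Submodule.span ℝ (iterSet T (F : Set C(X, ℝ)) ∪ cobSet T) : Set C(X, ℝ))
      = Set.univ)
    (hGsub : (G : Set C(X, ℝ)) ⊆ closure (cobSet T))
    (hG : closure (Submodule.span ℝ (iterSet T (G : Set C(X, ℝ))) : Set C(X, ℝ))
      = closure (cobSet T)) :
    ∃ H : Finset C(X, ℝ), H.card ≤ p + q - 1 ∧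
      Dense (Submodule.span ℝ (iterSet T (H : Set C(X, ℝ))) : Set C(X, ℝ)) :=
  mult_le_quotient_mult_add_coboundary_mult_sub_one_general T p q hq F G hFcard hGcard hF hGsub hG
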